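/- Let U = ℂ. Let x1, x0 be Bessel sequences in X and u0 ∈ ℓ²(ℕ), with synthesis operators Ξ1, Ξ0 ∈ L(ℓ²(ℕ),X) and Υ0 ∈ L(ℓ²(ℕ),ℂ) (Υ0 w = ∑_k w_k u0(k)), and suppose the data-generation assumption holds. Assume either that there exists w ∈ Ker Ξ0 with Υ0 w ≠ 0, or that Σ_is ≠ {(A_s,B_s)}. Fix γ ∈ (0,1). Then the data (x1,x0,u0) are informative for stabilization with decay rate γ if and only if the range of Ξ0 is dense in X and there exists a linear map Ξ0† : Ran Ξ0 → ℓ²(ℕ) such that (a) Ξ0(Ξ0† x) = x for all x ∈ Ran Ξ0, (b) there exists K' ∈ L(X,ℂ) with K' x = Υ0(Ξ0† x) for all x ∈ Ran Ξ0, and (c) there exists F ∈ L(X) with F x = Ξ1(Ξ0† x) for all x ∈ Ran Ξ0 and F is power stable with decay rate γ. -/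

import Mathlib

noncomputable section

/-- `ℓ²(ℕ)`: the Hilbert space of square-summable complex sequences. -/
abbrev l2 : Type := lp (fun _ : ℕ => ℂ) 2

/-- `η` is a Bessel sequence in `Y`. -/
def Bessel {Y : Type} [NormedAddCommGroup Y] [InnerProductSpace ℂ Y] (η : ℕ → Y) : Prop :=
  ∃ α : ℝ, 0 < α ∧ ∀ y : Y, ∑' k : ℕ, ‖(inner ℂ y (η k) : ℂ)‖ ^ 2 ≤ α * ‖y‖ ^ 2

/-- `T` is the synthesis operator associated with `η`: `T w = ∑ₖ wₖ • ηₖ`. -/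
def IsSynthesis {Y : Type} [NormedAddCommGroup Y] [InnerProductSpace ℂ Y] (η : ℕ → Y)
    (T : l2 →L[ℂ] Y) : Prop :=
  ∀ w : l2, HasSum (fun k : ℕ => w k • η k) (T w)


/-!
Every pair `(A, B)` consistent with the data satisfies `Ξ1 = A Ξ0 + B Υ0`, and conversely, so the
consistent pairs form an affine set of operators. A uniform bound on `A + B K` over an affine set
forces `A + B K` to be constant on it. Applied to `(A_s + P, B_s)` with `P Ξ0 = 0`, this makes
`Ξ0` have dense range; applied to a second consistent pair, or combined with a kernel vector of
`Ξ0` on which `Υ0` does not vanish, it produces a right inverse `Ξ0†` of `Ξ0` on its range with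
`Υ0 Ξ0† = K`, and then `F = A_s + B_s K` is the closed loop. Conversely, by density, the closed
loop `A + B K'` of any consistent pair agrees with `F = Ξ1 Ξ0†`.
-/

theorem eq_zero_of_forall_norm_add_smul_le {𝕜 F : Type*} [NontriviallyNormedField 𝕜]
    [NormedAddCommGroup F] [NormedSpace 𝕜 F] {a d : F} {C : ℝ}
    (h : ∀ t : 𝕜, ‖a + t • d‖ ≤ C) : d = 0 := by
  by_contra hd0
  have hd : 0 < ‖d‖ := norm_pos_iff.mpr hd0
  obtain ⟨t, ht⟩ := NormedField.exists_lt_norm 𝕜 ((C + ‖a‖) / ‖d‖)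
  have hle : ‖t‖ * ‖d‖ ≤ C + ‖a‖ := by
    calc ‖t‖ * ‖d‖ = ‖(a + t • d) - a‖ := by rw [add_sub_cancel_left, norm_smul]
      _ ≤ ‖a + t • d‖ + ‖a‖ := norm_sub_le _ _
      _ ≤ C + ‖a‖ := by linarith [h t]
  rw [div_lt_iff₀ hd] at ht
  linarith

theorem LinearMap.exists_rightInverse_on_range {K E X : Type*} [DivisionRing K] [AddCommGroup E]
    [Module K E] [AddCommGroup X] [Module K X] (T : E →ₗ[K] X) :
    ∃ g : LinearMap.range T →ₗ[K] E, ∀ x, T (g x) = x := by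
  obtain ⟨g, hg⟩ := T.rangeRestrict.exists_rightInverse_of_surjective T.range_rangeRestrict
  exact ⟨g, fun x => congrArg Subtype.val (LinearMap.congr_fun hg x)⟩

theorem LinearMap.exists_rightInverse_on_range_comp_eq {K E X : Type*} [Field K] [AddCommGroup E]
    [Module K E] [AddCommGroup X] [Module K X] (T : E →ₗ[K] X) (V : E →ₗ[K] K) {w₀ : E}
    (hT : T w₀ = 0) (hV : V w₀ ≠ 0) (k : LinearMap.range T →ₗ[K] K) :
    ∃ g : LinearMap.range T →ₗ[K] E, (∀ x, T (g x) = x) ∧ ∀ x, V (g x) = k x := by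
  obtain ⟨g, hg⟩ := T.exists_rightInverse_on_range
  refine ⟨g - ((V w₀)⁻¹ • (V ∘ₗ g - k)).smulRight w₀, fun x => ?_, fun x => ?_⟩
  · simp [hT, hg]
  · simp only [sub_apply, smulRight_apply, smul_apply, comp_apply, map_sub, map_smul, smul_eq_mul]
    field_simp
    ring

theorem ContinuousLinearMap.eq_zero_of_comp_eq_zero {𝕜 E X : Type*} [NontriviallyNormedField 𝕜]
    [NormedAddCommGroup E] [NormedSpace 𝕜 E] [NormedAddCommGroup X] [NormedSpace 𝕜 X]
    {D : 𝕜 →L[𝕜] X} (hD : D ≠ 0) {f : E →L[𝕜] 𝕜} (h : D.comp f = 0) : f = 0 := by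
  have hD1 : D 1 ≠ 0 := fun h1 => hD (ContinuousLinearMap.ext_ring (by simpa using h1))
  ext w
  have : f w • D 1 = 0 := by
    rw [← map_smul, smul_eq_mul, mul_one]
    exact congrArg (· w) h
  simpa [hD1] using this

section Synthesis

variable {Y Z : Type} [NormedAddCommGroup Y] [InnerProductSpace ℂ Y]
  [NormedAddCommGroup Z] [InnerProductSpace ℂ Z]

theorem IsSynthesis.unique {η : ℕ → Y} {T T' : l2 →L[ℂ] Y} (h : IsSynthesis η T)
    (h' : IsSynthesis η T') : T = T' :=
  ContinuousLinearMap.ext fun w => (h w).unique (h' w)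

theorem IsSynthesis.add {η η' : ℕ → Y} {T T' : l2 →L[ℂ] Y} (h : IsSynthesis η T)
    (h' : IsSynthesis η' T') : IsSynthesis (η + η') (T + T') := fun w => by
  simpa only [Pi.add_apply, smul_add, add_apply] using (h w).add (h' w)

theorem IsSynthesis.map {η : ℕ → Y} {T : l2 →L[ℂ] Y} (h : IsSynthesis η T) (A : Y →L[ℂ] Z) :
    IsSynthesis (A ∘ η) (A.comp T) := fun w => by
  simpa only [map_smul, Function.comp_apply, ContinuousLinearMap.comp_apply] using (h w).mapL A

theorem IsSynthesis.apply_single {η : ℕ → Y} {T : l2 →L[ℂ] Y} (h : IsSynthesis η T) (k : ℕ) :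
    T (lp.single 2 k 1) = η k := by
  refine (h _).unique ?_
  convert hasSum_ite_eq k (η k) using 2 with j
  by_cases hj : j = k <;> simp [lp.single_apply, hj]

theorem IsSynthesis.forall_eq_add_iff {x1 x0 : ℕ → Y} {u0 : ℕ → ℂ} {Ξ1 Ξ0 : l2 →L[ℂ] Y}
    {Υ0 : l2 →L[ℂ] ℂ} (hΞ1 : IsSynthesis x1 Ξ1) (hΞ0 : IsSynthesis x0 Ξ0)
    (hΥ0 : IsSynthesis u0 Υ0) (A : Y →L[ℂ] Y) (B : ℂ →L[ℂ] Y) :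
    (∀ k, x1 k = A (x0 k) + B (u0 k)) ↔ A.comp Ξ0 + B.comp Υ0 = Ξ1 := by
  constructor
  · intro h
    obtain rfl : x1 = A ∘ x0 + B ∘ u0 := funext h
    exact ((hΞ0.map A).add (hΥ0.map B)).unique hΞ1
  · rintro rfl k
    simp [← hΞ1.apply_single, hΞ0.apply_single, hΥ0.apply_single]

end Synthesis

section ClosedLoop

variable {𝕜 E U X : Type*} [NontriviallyNormedField 𝕜] [NormedAddCommGroup E] [NormedSpace 𝕜 E]
  [NormedAddCommGroup U] [NormedSpace 𝕜 U] [NormedAddCommGroup X] [NormedSpace 𝕜 X]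
  {T1 T0 : E →L[𝕜] X} {V : E →L[𝕜] U} {K : X →L[𝕜] U}

theorem closedLoop_eq_of_forall_norm_le {C : ℝ}
    (hbound : ∀ (A : X →L[𝕜] X) (B : U →L[𝕜] X), A.comp T0 + B.comp V = T1 → ‖A + B.comp K‖ ≤ C)
    {A A' : X →L[𝕜] X} {B B' : U →L[𝕜] X}
    (h : A.comp T0 + B.comp V = T1) (h' : A'.comp T0 + B'.comp V = T1) :
    A + B.comp K = A' + B'.comp K := by
  have hline : ∀ t : 𝕜,
      (A + t • (A' - A)).comp T0 + (B + t • (B' - B)).comp V = T1 := fun t => by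
    calc _ = A.comp T0 + B.comp V + t • ((A'.comp T0 + B'.comp V) - (A.comp T0 + B.comp V)) := by
          simp only [ContinuousLinearMap.add_comp, ContinuousLinearMap.smul_comp,
            ContinuousLinearMap.sub_comp]
          module
      _ = T1 := by rw [h, h', sub_self, smul_zero, add_zero]
  have hzero : (A' - A) + (B' - B).comp K = 0 := by
    refine eq_zero_of_forall_norm_add_smul_le (𝕜 := 𝕜) (a := A + B.comp K) (C := C) fun t => ?_
    calc _ = ‖(A + t • (A' - A)) + (B + t • (B' - B)).comp K‖ := by
          congr 1
          simp only [ContinuousLinearMap.add_comp, ContinuousLinearMap.smul_comp,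
            ContinuousLinearMap.sub_comp]
          module
      _ ≤ C := hbound _ _ (hline t)
  rw [← sub_eq_zero, ← neg_eq_zero, ← hzero, ContinuousLinearMap.sub_comp]
  abel

theorem closedLoop_eq_of_denseRange (hdense : DenseRange T0) {A : X →L[𝕜] X} {B : U →L[𝕜] X}
    (h : A.comp T0 + B.comp V = T1) {Ξd : LinearMap.range (T0 : E →ₗ[𝕜] X) →ₗ[𝕜] E}
    (hΞd : ∀ x, T0 (Ξd x) = x)
    (hK : ∀ x : LinearMap.range (T0 : E →ₗ[𝕜] X), K x = V (Ξd x)) {F : X →L[𝕜] X}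
    (hF : ∀ x : LinearMap.range (T0 : E →ₗ[𝕜] X), F x = T1 (Ξd x)) : A + B.comp K = F := by
  refine DFunLike.coe_injective (hdense.equalizer (map_continuous _)
    (map_continuous _) (funext fun w => ?_))
  let x : LinearMap.range (T0 : E →ₗ[𝕜] X) := ⟨T0 w, w, rfl⟩
  calc (A + B.comp K) (T0 w) = (A.comp T0 + B.comp V) (Ξd x) := by simp [← hK x, hΞd x, x]
    _ = F (T0 w) := by rw [h, hF x]

end ClosedLoop

theorem eq_comp_of_forall_norm_le {𝕜 E X : Type*} [NontriviallyNormedField 𝕜]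
    [NormedAddCommGroup E] [NormedSpace 𝕜 E] [NormedAddCommGroup X] [NormedSpace 𝕜 X]
    {T1 T0 : E →L[𝕜] X} {V : E →L[𝕜] 𝕜} {K : X →L[𝕜] 𝕜} {C : ℝ}
    (hbound : ∀ (A : X →L[𝕜] X) (B : 𝕜 →L[𝕜] X), A.comp T0 + B.comp V = T1 → ‖A + B.comp K‖ ≤ C)
    {A As : X →L[𝕜] X} {B Bs : 𝕜 →L[𝕜] X} (h : A.comp T0 + B.comp V = T1)
    (hs : As.comp T0 + Bs.comp V = T1) (hne : (A, B) ≠ (As, Bs)) : V = K.comp T0 := by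
  have hloop := closedLoop_eq_of_forall_norm_le hbound h hs
  have hB : B - Bs ≠ 0 := by
    rintro hB
    obtain rfl := sub_eq_zero.mp hB
    exact hne (by rw [add_right_cancel hloop])
  refine (sub_eq_zero.mp (ContinuousLinearMap.eq_zero_of_comp_eq_zero hB ?_))
  calc (B - Bs).comp (V - K.comp T0)
      = (A.comp T0 + B.comp V) - (As.comp T0 + Bs.comp V)
          - ((A + B.comp K) - (As + Bs.comp K)).comp T0 := by
        simp only [ContinuousLinearMap.comp_sub, ContinuousLinearMap.sub_comp,
          ContinuousLinearMap.add_comp, ContinuousLinearMap.comp_assoc]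
        abel
    _ = 0 := by rw [h, hs, hloop, sub_self, sub_self, ContinuousLinearMap.zero_comp, sub_zero]

theorem denseRange_of_forall_comp_eq_zero {𝕜 E X : Type*} [RCLike 𝕜] [NormedAddCommGroup E]
    [NormedSpace 𝕜 E] [NormedAddCommGroup X] [InnerProductSpace 𝕜 X] [CompleteSpace X]
    {T : E →L[𝕜] X} (h : ∀ P : X →L[𝕜] X, P.comp T = 0 → P = 0) : DenseRange T := by
  have : (LinearMap.range (T : E →ₗ[𝕜] X))ᗮ = ⊥ := by
    refine (Submodule.eq_bot_iff _).mpr fun z hz => ?_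
    have hP : ((innerSL 𝕜 z).smulRight z).comp T = 0 := by
      ext w
      simp [(Submodule.mem_orthogonal' _ z).mp hz (T w) ⟨w, rfl⟩]
    simpa using congrArg (fun P : X →L[𝕜] X => P z) (h _ hP)
  exact Submodule.dense_iff_topologicalClosure_eq_top.mpr
    (Submodule.topologicalClosure_eq_top_iff.mpr this)

theorem exists_stabilizing_feedback_iff {𝕜 E X : Type*} [RCLike 𝕜] [NormedAddCommGroup E]
    [NormedSpace 𝕜 E] [NormedAddCommGroup X] [InnerProductSpace 𝕜 X] [CompleteSpace X]
    {T1 T0 : E →L[𝕜] X} {V : E →L[𝕜] 𝕜} {As : X →L[𝕜] X} {Bs : 𝕜 →L[𝕜] X}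
    (hgen : As.comp T0 + Bs.comp V = T1)
    (hassump : (∃ w, T0 w = 0 ∧ V w ≠ 0) ∨
      {p : (X →L[𝕜] X) × (𝕜 →L[𝕜] X) | p.1.comp T0 + p.2.comp V = T1} ≠ {(As, Bs)})
    (γ : ℝ) :
    (∃ (K : X →L[𝕜] 𝕜) (M : ℝ), 1 ≤ M ∧ ∀ (A : X →L[𝕜] X) (B : 𝕜 →L[𝕜] X),
        A.comp T0 + B.comp V = T1 → ∀ k : ℕ, ‖(A + B.comp K) ^ k‖ ≤ M * γ ^ k) ↔
    (DenseRange T0 ∧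
      ∃ Ξd : LinearMap.range (T0 : E →ₗ[𝕜] X) →ₗ[𝕜] E,
        (∀ x, T0 (Ξd x) = x) ∧
        (∃ K' : X →L[𝕜] 𝕜, ∀ x : LinearMap.range (T0 : E →ₗ[𝕜] X), K' x = V (Ξd x)) ∧
        (∃ F : X →L[𝕜] X, (∀ x : LinearMap.range (T0 : E →ₗ[𝕜] X), F x = T1 (Ξd x)) ∧
          ∃ M : ℝ, 1 ≤ M ∧ ∀ k : ℕ, ‖F ^ k‖ ≤ M * γ ^ k)) := by
  constructor
  · rintro ⟨K, M, hM, hKM⟩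
    have hbound : ∀ (A : X →L[𝕜] X) (B : 𝕜 →L[𝕜] X),
        A.comp T0 + B.comp V = T1 → ‖A + B.comp K‖ ≤ M * γ := fun A B h => by
      simpa using hKM A B h 1
    have hdense : DenseRange T0 := denseRange_of_forall_comp_eq_zero fun P hP => by
      have hP' : (As + P).comp T0 + Bs.comp V = T1 := by
        rw [ContinuousLinearMap.add_comp, hP, add_zero, hgen]
      simpa [add_right_comm] using closedLoop_eq_of_forall_norm_le hbound hP' hgen
    obtain ⟨Ξd, hΞd, hVK⟩ : ∃ Ξd : LinearMap.range (T0 : E →ₗ[𝕜] X) →ₗ[𝕜] E,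
        (∀ x, T0 (Ξd x) = x) ∧ ∀ x, V (Ξd x) = K x := by
      rcases hassump with ⟨w₀, hw₀, hVw₀⟩ | hne
      · exact LinearMap.exists_rightInverse_on_range_comp_eq _ _ hw₀ hVw₀
          ((K : X →ₗ[𝕜] 𝕜) ∘ₗ Submodule.subtype _)
      · obtain ⟨⟨A, B⟩, h, hAB⟩ : ∃ p : (X →L[𝕜] X) × (𝕜 →L[𝕜] X),
            p.1.comp T0 + p.2.comp V = T1 ∧ p ≠ (As, Bs) := by
          by_contra! hc
          exact hne (Set.eq_singleton_iff_unique_mem.mpr ⟨hgen, hc⟩)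
        have hV := eq_comp_of_forall_norm_le hbound h hgen hAB
        obtain ⟨g, hg⟩ := (T0 : E →ₗ[𝕜] X).exists_rightInverse_on_range
        exact ⟨g, hg, fun x => by rw [hV, ContinuousLinearMap.comp_apply]; exact congrArg K (hg x)⟩
    refine ⟨hdense, Ξd, hΞd, ⟨K, fun x => (hVK x).symm⟩,
      ⟨As + Bs.comp K, fun x => ?_, M, hM, hKM As Bs hgen⟩⟩
    simp [← hgen, hΞd, hVK]
  · rintro ⟨hdense, Ξd, hΞd, ⟨K', hK'⟩, F, hF, M, hM, hFpow⟩
    refine ⟨K', M, hM, fun A B h k => ?_⟩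
    rw [closedLoop_eq_of_denseRange hdense h hΞd hK' hF]
    exact hFpow k

theorem stmt_4_general
    {X : Type} [NormedAddCommGroup X] [InnerProductSpace ℂ X] [CompleteSpace X]
    (x1 x0 : ℕ → X) (u0 : ℕ → ℂ)
    (Ξ1 Ξ0 : l2 →L[ℂ] X) (Υ0 : l2 →L[ℂ] ℂ)
    (hΞ1 : IsSynthesis x1 Ξ1) (hΞ0 : IsSynthesis x0 Ξ0)
    (hΥ0 : ∀ w : l2, HasSum (fun k : ℕ => w k * u0 k) (Υ0 w))
    (As : X →L[ℂ] X) (Bs : ℂ →L[ℂ] X)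
    (hgen : ∀ k : ℕ, x1 k = As (x0 k) + Bs (u0 k))
    (hassump :
      (∃ w : l2, Ξ0 w = 0 ∧ Υ0 w ≠ 0) ∨
      {p : (X →L[ℂ] X) × (ℂ →L[ℂ] X) | ∀ k : ℕ, x1 k = p.1 (x0 k) + p.2 (u0 k)} ≠ {(As, Bs)})
    (γ : ℝ) :
    -- informativity for stabilization with decay rate γ
    (∃ (K : X →L[ℂ] ℂ) (M : ℝ), 1 ≤ M ∧ ∀ (A : X →L[ℂ] X) (B : ℂ →L[ℂ] X),
        (∀ k : ℕ, x1 k = A (x0 k) + B (u0 k)) →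
        ∀ k : ℕ, ‖(A + B.comp K) ^ k‖ ≤ M * γ ^ k)
    ↔
    (DenseRange ⇑Ξ0 ∧
      ∃ Ξd : ↥(LinearMap.range (Ξ0 : l2 →ₗ[ℂ] X)) →ₗ[ℂ] l2,
        (∀ x : ↥(LinearMap.range (Ξ0 : l2 →ₗ[ℂ] X)), Ξ0 (Ξd x) = (x : X)) ∧
        (∃ K' : X →L[ℂ] ℂ, ∀ x : ↥(LinearMap.range (Ξ0 : l2 →ₗ[ℂ] X)), K' (x : X) = Υ0 (Ξd x)) ∧
        (∃ F : X →L[ℂ] X, (∀ x : ↥(LinearMap.range (Ξ0 : l2 →ₗ[ℂ] X)), F (x : X) = Ξ1 (Ξd x)) ∧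
          ∃ M : ℝ, 1 ≤ M ∧ ∀ k : ℕ, ‖F ^ k‖ ≤ M * γ ^ k)) := by
  have hcons := IsSynthesis.forall_eq_add_iff hΞ1 hΞ0 hΥ0
  simp only [hcons] at hassump ⊢
  exact exists_stabilizing_feedback_iff ((hcons As Bs).mp hgen) hassump γ

theorem stmt_4
    {X : Type} [NormedAddCommGroup X] [InnerProductSpace ℂ X] [CompleteSpace X] [Nontrivial X]
    (x1 x0 : ℕ → X) (u0 : ℕ → ℂ)
    (hx1B : Bessel x1) (hx0B : Bessel x0) (hu0 : Memℓp u0 2)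
    (Ξ1 Ξ0 : l2 →L[ℂ] X) (Υ0 : l2 →L[ℂ] ℂ)
    (hΞ1 : IsSynthesis x1 Ξ1) (hΞ0 : IsSynthesis x0 Ξ0)
    (hΥ0 : ∀ w : l2, HasSum (fun k : ℕ => w k * u0 k) (Υ0 w))
    (As : X →L[ℂ] X) (Bs : ℂ →L[ℂ] X)
    (hgen : ∀ k : ℕ, x1 k = As (x0 k) + Bs (u0 k))
    (hassump :
      (∃ w : l2, Ξ0 w = 0 ∧ Υ0 w ≠ 0) ∨
      {p : (X →L[ℂ] X) × (ℂ →L[ℂ] X) | ∀ k : ℕ, x1 k = p.1 (x0 k) + p.2 (u0 k)} ≠ {(As, Bs)})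
    (γ : ℝ) (hγ0 : 0 < γ) (hγ1 : γ < 1) :
    -- informativity for stabilization with decay rate γ
    (∃ (K : X →L[ℂ] ℂ) (M : ℝ), 1 ≤ M ∧ ∀ (A : X →L[ℂ] X) (B : ℂ →L[ℂ] X),
        (∀ k : ℕ, x1 k = A (x0 k) + B (u0 k)) →
        ∀ k : ℕ, ‖(A + B.comp K) ^ k‖ ≤ M * γ ^ k)
    ↔
    (DenseRange ⇑Ξ0 ∧
      ∃ Ξd : ↥(LinearMap.range (Ξ0 : l2 →ₗ[ℂ] X)) →ₗ[ℂ] l2,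
        (∀ x : ↥(LinearMap.range (Ξ0 : l2 →ₗ[ℂ] X)), Ξ0 (Ξd x) = (x : X)) ∧
        (∃ K' : X →L[ℂ] ℂ, ∀ x : ↥(LinearMap.range (Ξ0 : l2 →ₗ[ℂ] X)), K' (x : X) = Υ0 (Ξd x)) ∧
        (∃ F : X →L[ℂ] X, (∀ x : ↥(LinearMap.range (Ξ0 : l2 →ₗ[ℂ] X)), F (x : X) = Ξ1 (Ξd x)) ∧
          ∃ M : ℝ, 1 ≤ M ∧ ∀ k : ℕ, ‖F ^ k‖ ≤ M * γ ^ k)) :=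
  stmt_4_general x1 x0 u0 Ξ1 Ξ0 Υ0 hΞ1 hΞ0 hΥ0 As Bs hgen hassump γ
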